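/- Let R be a commutative Frobenius ring (or more concretely, a finite commutative ring where the dual of a free rank-k submodule of R^{2k} has the complementary cardinality), n ≥ 1, and let A, B, C, D be λ-circulant n×n matrices over R satisfying A·Aᵀ + B·Bᵀ + C·Cᵀ + D·Dᵀ = -I_n and A·Bᵀ - B·Aᵀ - C·Dᵀ + D·Cᵀ = 0. Then the linear code of length 8n generated by G = (I_{4n} | M), where M is the block matrix with rows (A, B, CJ, DJ), (-B, A, DJ, -CJ), (-CJ, -DJ, A, B), (-DJ, CJ, -B, A), is self-orthogonal: every two rows of G have Euclidean inner product 0. -/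

import Mathlib

/-!
λ-circulant matrices commute: reindexing the product by `k ↦ i + j - k` in `ℤ/n` preserves the
number of wrap-arounds, hence the power of `λ`. Moreover `X * J` is symmetric for λ-circulant `X`,
so `X (Y J)ᵀ = (Y J) Xᵀ` for λ-circulant `X, Y`, while `(X J)(Y J)ᵀ = X Yᵀ` as `J` is orthogonal.
With `P = [[A, B], [-B, A]]` and `Q = [[CJ, DJ], [DJ, -CJ]]` the two hypotheses become
`P Pᵀ + Q Qᵀ = -I` and `Q Pᵀ = P Qᵀ`, so `M = [[P, Q], [-Q, P]]` has `M Mᵀ = -I`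
and `G Gᵀ = I + M Mᵀ = 0`.
-/

open Matrix Polynomial

/-- The `l`-circulant matrix with first row `a`: each row is the `l`-cyclic
shift of the previous one (last entry wraps to the front multiplied by `l`). -/
def lamCirc {R : Type*} [CommRing R] (n : ℕ) (l : R) (a : Fin n → R) :
    Matrix (Fin n) (Fin n) R :=
  fun i j =>
    if h : (i : ℕ) ≤ (j : ℕ) then a ⟨(j : ℕ) - (i : ℕ), by have := j.isLt; omega⟩
    else l * a ⟨n + (j : ℕ) - (i : ℕ), by have := i.isLt; have := j.isLt; omega⟩

/-- `A` is an `l`-circulant matrix. -/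
def IsLamCirc {R : Type*} [CommRing R] (n : ℕ) (l : R) (A : Matrix (Fin n) (Fin n) R) : Prop :=
  ∃ a : Fin n → R, A = lamCirc n l a

/-- The back-diagonal permutation matrix `J` with `J_{i, n-i+1} = 1` (1-indexed). -/
def backDiag {R : Type*} [CommRing R] (n : ℕ) : Matrix (Fin n) (Fin n) R :=
  fun i j => if (i : ℕ) + (j : ℕ) + 1 = n then 1 else 0

section

variable {R : Type*} [CommRing R] {n : ℕ}

lemma backDiag_eq_permMatrix :
    (backDiag n : Matrix (Fin n) (Fin n) R) = (Fin.revPerm : Equiv.Perm (Fin n)).permMatrix R := by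
  ext i j
  simp only [backDiag, PEquiv.toMatrix_apply, Equiv.toPEquiv_apply, Option.mem_def,
    Option.some.injEq, Fin.revPerm_apply, Fin.ext_iff, Fin.val_rev]
  congr 1
  grind

lemma transpose_backDiag : (backDiag n : Matrix (Fin n) (Fin n) R)ᵀ = backDiag n := by
  rw [backDiag_eq_permMatrix, transpose_permMatrix]
  rfl

lemma backDiag_mul_transpose : (backDiag n : Matrix (Fin n) (Fin n) R) * (backDiag n)ᵀ = 1 := by
  have hrev : (Fin.revPerm : Equiv.Perm (Fin n)) * Fin.revPerm = 1 := Equiv.ext Fin.rev_rev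
  rw [transpose_backDiag, backDiag_eq_permMatrix, ← permMatrix_mul, hrev, permMatrix_one]

lemma mul_backDiag_apply (X : Matrix (Fin n) (Fin n) R) (i j : Fin n) :
    (X * backDiag n : Matrix (Fin n) (Fin n) R) i j = X i j.rev := by
  rw [backDiag_eq_permMatrix, PEquiv.mul_toMatrix_toPEquiv]
  rfl

lemma lamCirc_apply (l : R) (a : Fin n → R) (i j : Fin n) :
    lamCirc n l a i j = (if j < i then l else 1) * a (j - i) := by
  unfold lamCirc
  split_ifs with h h'
  · omega
  · rw [one_mul]; congr 1; ext; exact (Fin.sub_val_of_le h).symm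
  · congr 2; ext; exact (Fin.coe_sub_iff_lt.2 (Fin.not_le.1 h)).symm
  · omega

lemma lamCirc_mul_comm (l : R) (a b : Fin n → R) :
    lamCirc n l a * lamCirc n l b = lamCirc n l b * lamCirc n l a := by
  ext i j
  have : NeZero n := ⟨i.pos.ne'⟩
  refine Fintype.sum_equiv (Equiv.subLeft (i + j)) _ _ fun k => ?_
  set m := i + j - k with hm
  have hmi : m - i = j - k := by rw [hm]; abel
  have hjm : j - m = k - i := by rw [hm]; abel
  have hmk : ((m + k : Fin n) : ℕ) = (i + j : Fin n) := by rw [hm, sub_add_cancel]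
  rw [Fin.val_add_eq_ite, Fin.val_add_eq_ite] at hmk
  simp only [lamCirc_apply, Equiv.subLeft_apply, ← hm, hmi, hjm, Fin.lt_def]
  split_ifs at hmk ⊢ <;> first | omega | ring

lemma lamCirc_mul_backDiag_isSymm (l : R) (a : Fin n → R) :
    (lamCirc n l a * backDiag n).IsSymm := by
  ext i j
  simp only [transpose_apply, mul_backDiag_apply, lamCirc_apply, Fin.rev_lt_iff]
  rw [← Fin.rev_add, ← Fin.rev_add, add_comm]

lemma IsLamCirc.mul_transpose_mul_backDiag {l : R} {X Y : Matrix (Fin n) (Fin n) R}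
    (hX : IsLamCirc n l X) (hY : IsLamCirc n l Y) :
    X * (Y * backDiag n)ᵀ = Y * backDiag n * Xᵀ := by
  obtain ⟨x, rfl⟩ := hX
  obtain ⟨y, rfl⟩ := hY
  calc lamCirc n l x * (lamCirc n l y * backDiag n)ᵀ
      = lamCirc n l x * (lamCirc n l y * backDiag n) := by
        rw [(lamCirc_mul_backDiag_isSymm l y).eq]
    _ = lamCirc n l y * (lamCirc n l x * backDiag n)ᵀ := by
        rw [(lamCirc_mul_backDiag_isSymm l x).eq, ← Matrix.mul_assoc, lamCirc_mul_comm,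
          Matrix.mul_assoc]
    _ = lamCirc n l y * backDiag n * (lamCirc n l x)ᵀ := by
        rw [transpose_mul, transpose_backDiag, Matrix.mul_assoc]

lemma mul_backDiag_mul_transpose_mul_backDiag (X Y : Matrix (Fin n) (Fin n) R) :
    X * backDiag n * (Y * backDiag n)ᵀ = X * Yᵀ := by
  rw [transpose_mul, Matrix.mul_assoc, ← Matrix.mul_assoc (backDiag n), backDiag_mul_transpose,
    Matrix.one_mul]

end

section

variable {m α : Type*} [CommRing α]

lemma neg_one_eq_fromBlocks [DecidableEq m] :
    (-1 : Matrix (m ⊕ m) (m ⊕ m) α) = fromBlocks (-1) 0 0 (-1) := by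
  rw [← fromBlocks_one, fromBlocks_neg, neg_zero]

lemma fromBlocks_mul_transpose_eq_neg_one [Fintype m] [DecidableEq m] (P Q : Matrix m m α)
    (hPQ : P * Pᵀ + Q * Qᵀ = -1) (hQP : Q * Pᵀ = P * Qᵀ) :
    fromBlocks P Q (-Q) P * (fromBlocks P Q (-Q) P)ᵀ = -1 := by
  simp only [fromBlocks_transpose, fromBlocks_multiply, transpose_neg, Matrix.mul_neg,
    Matrix.neg_mul, neg_one_eq_fromBlocks, fromBlocks_inj, hQP]
  exact ⟨hPQ, by abel, by abel, by rw [← hPQ]; abel⟩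

lemma fromBlocks_gram_add_gram_eq_neg_one [Fintype m] [DecidableEq m] (A B X Y : Matrix m m α)
    (h1 : A * Aᵀ + B * Bᵀ + X * Xᵀ + Y * Yᵀ = -1)
    (h2 : A * Bᵀ - B * Aᵀ - X * Yᵀ + Y * Xᵀ = 0) :
    fromBlocks A B (-B) A * (fromBlocks A B (-B) A)ᵀ
      + fromBlocks X Y Y (-X) * (fromBlocks X Y Y (-X))ᵀ = -1 := by
  simp only [fromBlocks_transpose, fromBlocks_multiply, fromBlocks_add, transpose_neg,
    Matrix.mul_neg, Matrix.neg_mul, neg_neg, neg_one_eq_fromBlocks, fromBlocks_inj]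
  refine ⟨by rw [← h1]; abel, ?_, ?_, by rw [← h1]; abel⟩
  · rw [← neg_eq_zero, ← h2]; abel
  · rw [← h2]; abel

lemma fromBlocks_mul_transpose_fromBlocks_comm [Fintype m] (A B X Y : Matrix m m α)
    (hAX : A * Xᵀ = X * Aᵀ) (hAY : A * Yᵀ = Y * Aᵀ) (hBX : B * Xᵀ = X * Bᵀ)
    (hBY : B * Yᵀ = Y * Bᵀ) :
    fromBlocks X Y Y (-X) * (fromBlocks A B (-B) A)ᵀ
      = fromBlocks A B (-B) A * (fromBlocks X Y Y (-X))ᵀ := by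
  simp only [fromBlocks_transpose, fromBlocks_multiply, transpose_neg, Matrix.mul_neg,
    Matrix.neg_mul, hAX, hAY, hBX, hBY]
  congr 1 <;> abel

lemma fromCols_one_self_orthogonal [Fintype m] [DecidableEq m] {M : Matrix m m α}
    (hM : M * Mᵀ = -1) (i j : m) :
    ∑ k, fromCols (1 : Matrix m m α) M i k * fromCols (1 : Matrix m m α) M j k = 0 := by
  have hG : fromCols (1 : Matrix m m α) M * (fromCols (1 : Matrix m m α) M)ᵀ = 0 := by
    rw [transpose_fromCols, fromCols_mul_fromRows, hM, transpose_one, Matrix.mul_one,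
      add_neg_cancel]
  exact congrFun₂ hG i j

end

theorem construction_I_self_orthogonal_general {R : Type*} [CommRing R] {n : ℕ} (l : R)
    (A B C D : Matrix (Fin n) (Fin n) R)
    (hA : IsLamCirc n l A) (hB : IsLamCirc n l B)
    (hC : IsLamCirc n l C) (hD : IsLamCirc n l D)
    (h1 : A * Aᵀ + B * Bᵀ + C * Cᵀ + D * Dᵀ = -1)
    (h2 : A * Bᵀ - B * Aᵀ - C * Dᵀ + D * Cᵀ = 0) :
    let J : Matrix (Fin n) (Fin n) R := backDiag n
    let M : Matrix ((Fin n ⊕ Fin n) ⊕ (Fin n ⊕ Fin n)) ((Fin n ⊕ Fin n) ⊕ (Fin n ⊕ Fin n)) R :=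
      Matrix.fromBlocks
        (Matrix.fromBlocks A B (-B) A)
        (Matrix.fromBlocks (C * J) (D * J) (D * J) (-(C * J)))
        (Matrix.fromBlocks (-(C * J)) (-(D * J)) (-(D * J)) (C * J))
        (Matrix.fromBlocks A B (-B) A)
    let G := Matrix.fromCols (1 : Matrix ((Fin n ⊕ Fin n) ⊕ (Fin n ⊕ Fin n)) ((Fin n ⊕ Fin n) ⊕ (Fin n ⊕ Fin n)) R) M
    ∀ i j, ∑ k, G i k * G j k = 0 := by
  intro J M G
  have hM : M * Mᵀ = -1 := by
    have hQ : fromBlocks (-(C * J)) (-(D * J)) (-(D * J)) (C * J)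
        = -fromBlocks (C * J) (D * J) (D * J) (-(C * J)) := by
      rw [fromBlocks_neg, neg_neg]
    simp only [M, hQ]
    refine fromBlocks_mul_transpose_eq_neg_one _ _ ?_ ?_
    · apply fromBlocks_gram_add_gram_eq_neg_one
      · simpa only [J, mul_backDiag_mul_transpose_mul_backDiag] using h1
      · simpa only [J, mul_backDiag_mul_transpose_mul_backDiag] using h2
    · exact fromBlocks_mul_transpose_fromBlocks_comm _ _ _ _ (hA.mul_transpose_mul_backDiag hC)
        (hA.mul_transpose_mul_backDiag hD) (hB.mul_transpose_mul_backDiag hC)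
        (hB.mul_transpose_mul_backDiag hD)
  exact fromCols_one_self_orthogonal hM

/-- Construction I: the code generated by (I | M) is self-orthogonal. -/
theorem construction_I_self_orthogonal {R : Type*} [CommRing R] {n : ℕ} (hn : 1 ≤ n) (l : R)
    (A B C D : Matrix (Fin n) (Fin n) R)
    (hA : IsLamCirc n l A) (hB : IsLamCirc n l B)
    (hC : IsLamCirc n l C) (hD : IsLamCirc n l D)
    (h1 : A * Aᵀ + B * Bᵀ + C * Cᵀ + D * Dᵀ = -1)
    (h2 : A * Bᵀ - B * Aᵀ - C * Dᵀ + D * Cᵀ = 0) :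
    let J : Matrix (Fin n) (Fin n) R := backDiag n
    let M : Matrix ((Fin n ⊕ Fin n) ⊕ (Fin n ⊕ Fin n)) ((Fin n ⊕ Fin n) ⊕ (Fin n ⊕ Fin n)) R :=
      Matrix.fromBlocks
        (Matrix.fromBlocks A B (-B) A)
        (Matrix.fromBlocks (C * J) (D * J) (D * J) (-(C * J)))
        (Matrix.fromBlocks (-(C * J)) (-(D * J)) (-(D * J)) (C * J))
        (Matrix.fromBlocks A B (-B) A)
    let G := Matrix.fromCols (1 : Matrix ((Fin n ⊕ Fin n) ⊕ (Fin n ⊕ Fin n)) ((Fin n ⊕ Fin n) ⊕ (Fin n ⊕ Fin n)) R) M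
    ∀ i j, ∑ k, G i k * G j k = 0 :=
  construction_I_self_orthogonal_general l A B C D hA hB hC hD h1 h2
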